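/- Let r ≥ 3 be an odd integer, let ε₁, ε₂ ∈ (0,1), and let z ∈ ℂ satisfy −π/r < Re z < π + π/r. Then the value of the contour integral defining the quantum dilogarithm is independent of the radius of the semicircular detour: ( ∫_{−∞}^{−ε₁} f_z(x) dx + ∫_0^π f_z(ε₁ e^{i(π−t)})·(−i ε₁ e^{i(π−t)}) dt + ∫_{ε₁}^∞ f_z(x) dx ) = ( ∫_{−∞}^{−ε₂} f_z(x) dx + ∫_0^π f_z(ε₂ e^{i(π−t)})·(−i ε₂ e^{i(π−t)}) dt + ∫_{ε₂}^∞ f_z(x) dx ), where f_z(w) = e^{(2z−π)w}/(4w·sinh(πw)·sinh(2πw/r)). -/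

import Mathlib

open MeasureTheory intervalIntegral

/-- The integrand in the contour-integral definition of the quantum dilogarithm. -/
noncomputable def qdInt (r : ℕ) (z w : ℂ) : ℂ :=
  Complex.exp ((2 * z - (Real.pi : ℂ)) * w) /
    (4 * w * Complex.sinh ((Real.pi : ℂ) * w) * Complex.sinh (2 * (Real.pi : ℂ) * w / (r : ℂ)))

/-- The contour integral over `Ω = (−∞,−ε] ∪ {|x|=ε, Im x > 0} ∪ [ε,∞)`, the semicircle
being parameterized by `γ(t) = ε e^{i(π−t)}`, `t ∈ [0,π]`. -/
noncomputable def qdContour (r : ℕ) (ε : ℝ) (z : ℂ) : ℂ :=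
  (∫ x in Set.Iic (-ε), qdInt r z (x : ℂ)) +
  (∫ t in (0:ℝ)..Real.pi,
      qdInt r z ((ε : ℂ) * Complex.exp (Complex.I * ((Real.pi : ℂ) - (t : ℂ)))) *
        (-Complex.I * (ε : ℂ) * Complex.exp (Complex.I * ((Real.pi : ℂ) - (t : ℂ))))) +
  (∫ x in Set.Ici ε, qdInt r z (x : ℂ))

/-!
Substituting `w = exp u` turns the closed half-annulus between the two semicircles into the
rectangle `[log ε₁, log ε₂] × [0, π]`, on which `u ↦ f (exp u) * exp u` is holomorphic as soon
as `f` is holomorphic on the half-annulus. Cauchy's theorem for that rectangle says that the two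
semicircle integrals differ by the integrals of `f` over `[-ε₂, -ε₁]` and `[ε₁, ε₂]`, which is
exactly how the real-axis pieces of the contour change. For `f = f_z` the poles `i n` of
`sinh (π w)` and `i n r / 2` of `sinh (2 π w / r)` all have modulus at least `1`, and the real
tails converge because `f_z x` decays like `exp (-(2π + 2π/r - 2 Re z) x)` as `x → ∞` and, by the
symmetry `f_z (-w) = -f_{π - z} w`, also as `x → -∞`.
-/

open Complex Set Filter Asymptotics
open scoped Real

theorem Complex.exists_mul_I_eq_of_sinh_eq_zero {w : ℂ} (h : sinh w = 0) :
    ∃ k : ℤ, w * I = k * π :=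
  sin_eq_zero_iff.mp (by rw [sin_mul_I, h, zero_mul])

theorem Complex.sinh_ne_zero_of_re_ne_zero {w : ℂ} (hw : w.re ≠ 0) : sinh w ≠ 0 := by
  intro h
  obtain ⟨k, hk⟩ := exists_mul_I_eq_of_sinh_eq_zero h
  exact hw (by simpa using congrArg im hk)

theorem Complex.sinh_ne_zero_of_norm_lt_pi {w : ℂ} (hw0 : w ≠ 0) (hw : ‖w‖ < π) :
    sinh w ≠ 0 := by
  intro h
  obtain ⟨k, hk⟩ := exists_mul_I_eq_of_sinh_eq_zero h
  have hk0 : k ≠ 0 := by rintro rfl; simp_all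
  have hnorm : ‖w‖ = |(k : ℝ)| * π := by
    simpa [abs_of_pos Real.pi_pos] using congrArg norm hk
  have hk1 : (1 : ℝ) ≤ |(k : ℝ)| := by exact_mod_cast Int.one_le_abs hk0
  nlinarith [Real.pi_pos]

theorem Real.exp_le_four_mul_sinh {t : ℝ} (ht : 1 / 2 ≤ t) : Real.exp t ≤ 4 * Real.sinh t := by
  have h2 : 2 ≤ Real.exp t * Real.exp t := by
    rw [← Real.exp_add]; linarith [Real.add_one_le_exp (t + t)]
  have hinv : Real.exp (-t) * Real.exp t = 1 := by rw [← Real.exp_add]; simp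
  rw [Real.sinh_eq]
  nlinarith [Real.exp_pos t, Real.exp_pos (-t)]

theorem integral_comp_exp_mul_exp {g : ℝ → ℂ} {a b : ℝ}
    (hg : ContinuousOn g (uIcc (Real.exp a) (Real.exp b))) :
    ∫ x in a..b, g (Real.exp x) * Real.exp x = ∫ t in Real.exp a..Real.exp b, g t := by
  rw [← Real.image_exp_uIcc] at hg
  rw [← intervalIntegral.integral_deriv_smul_comp' (fun x _ => Real.hasDerivAt_exp x)
    Real.continuous_exp.continuousOn hg]
  simp [real_smul, mul_comm]

noncomputable def semicircleIntegral (f : ℂ → ℂ) (ε : ℝ) : ℂ :=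
  ∫ t in (0 : ℝ)..π, f (ε * exp (I * (π - t))) * (-I * ε * exp (I * (π - t)))

def upperHalfAnnulus (ε₁ ε₂ : ℝ) : Set ℂ := {w | ‖w‖ ∈ uIcc ε₁ ε₂ ∧ 0 ≤ w.im}

theorem mapsTo_exp_upperHalfAnnulus (a b : ℝ) :
    MapsTo exp (uIcc a b ×ℂ uIcc 0 π) (upperHalfAnnulus (Real.exp a) (Real.exp b)) := by
  rintro u ⟨hre, him⟩
  rw [uIcc_of_le Real.pi_pos.le] at him
  refine ⟨?_, ?_⟩
  · rw [norm_exp, ← Real.image_exp_uIcc]; exact mem_image_of_mem _ hre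
  · rw [exp_im]
    exact mul_nonneg (Real.exp_pos _).le (Real.sin_nonneg_of_nonneg_of_le_pi him.1 him.2)

theorem ofReal_mem_upperHalfAnnulus {ε₁ ε₂ t : ℝ} (ht : |t| ∈ uIcc ε₁ ε₂) :
    (t : ℂ) ∈ upperHalfAnnulus ε₁ ε₂ :=
  ⟨by rwa [norm_real, Real.norm_eq_abs], by simp⟩

theorem semicircleIntegral_eq_integral_comp_exp {f : ℂ → ℂ} {ε : ℝ} (hε : 0 < ε) :
    semicircleIntegral f ε =
      -I * ∫ y in (0 : ℝ)..π, f (exp (Real.log ε + y * I)) * exp (Real.log ε + y * I) := by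
  have hpolar (t : ℝ) : exp (Real.log ε + ((π - t : ℝ) : ℂ) * I) = ε * exp (I * (π - t)) := by
    rw [exp_add, ← ofReal_exp, Real.exp_log hε]; push_cast; ring_nf
  have hflip := intervalIntegral.integral_comp_sub_left
    (fun y : ℝ => f (exp (Real.log ε + y * I)) * exp (Real.log ε + y * I)) π (a := 0) (b := π)
  simp only [sub_self, sub_zero, hpolar] at hflip
  rw [← hflip, ← intervalIntegral.integral_const_mul]
  unfold semicircleIntegral
  congr 1; ext t; ring

theorem semicircleIntegral_sub_semicircleIntegral {f : ℂ → ℂ} {ε₁ ε₂ : ℝ} (h₁ : 0 < ε₁)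
    (h₂ : 0 < ε₂) (hf : DifferentiableOn ℂ f (upperHalfAnnulus ε₁ ε₂)) :
    semicircleIntegral f ε₂ - semicircleIntegral f ε₁ =
      (∫ x in -ε₂..-ε₁, f x) + ∫ x in ε₁..ε₂, f x := by
  rw [semicircleIntegral_eq_integral_comp_exp h₁, semicircleIntegral_eq_integral_comp_exp h₂]
  set a := Real.log ε₁
  set b := Real.log ε₂
  have ha : Real.exp a = ε₁ := Real.exp_log h₁
  have hb : Real.exp b = ε₂ := Real.exp_log h₂
  have hmaps := mapsTo_exp_upperHalfAnnulus a b
  rw [ha, hb] at hmaps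
  have hg : DifferentiableOn ℂ (fun u => f (exp u) * exp u) (uIcc a b ×ℂ uIcc 0 π) :=
    (hf.comp differentiable_exp.differentiableOn hmaps).mul differentiable_exp.differentiableOn
  have hrect := integral_boundary_rect_eq_zero_of_differentiableOn _ a (b + π * I)
    (by simpa using hg)
  have hpos {t : ℝ} (ht : t ∈ uIcc ε₁ ε₂) : 0 < t := (lt_min h₁ h₂).trans_le ht.1
  have hreal : MapsTo (fun t : ℝ => (t : ℂ)) (uIcc ε₁ ε₂) (upperHalfAnnulus ε₁ ε₂) :=
    fun t ht => ofReal_mem_upperHalfAnnulus (by rwa [abs_of_pos (hpos ht)])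
  have hneg : MapsTo (fun t : ℝ => ((-t : ℝ) : ℂ)) (uIcc ε₁ ε₂) (upperHalfAnnulus ε₁ ε₂) :=
    fun t ht => ofReal_mem_upperHalfAnnulus (by rwa [abs_neg, abs_of_pos (hpos ht)])
  have hbottom : ∫ x in a..b, f (exp x) * exp x = ∫ x in ε₁..ε₂, f x := by
    rw [← ha, ← hb, ← integral_comp_exp_mul_exp (g := fun t : ℝ => f t)]
    · simp
    · rw [ha, hb]; exact hf.continuousOn.comp continuous_ofReal.continuousOn hreal
  have htop : ∫ x in a..b, f (-exp x) * exp x = ∫ x in -ε₂..-ε₁, f x := by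
    rw [← intervalIntegral.integral_comp_neg, ← ha, ← hb,
      ← integral_comp_exp_mul_exp (g := fun t : ℝ => f ↑(-t))]
    · simp
    · rw [ha, hb]; exact hf.continuousOn.comp (by fun_prop) hneg
  simp only [ofReal_re, ofReal_im, add_re, add_im, mul_re, mul_im, I_re, I_im, mul_zero,
    mul_one, sub_self, zero_add, add_zero, ofReal_zero, zero_mul, exp_add_pi_mul_I, mul_neg,
    intervalIntegral.integral_neg, sub_neg_eq_add, smul_eq_mul] at hrect
  linear_combination -hrect + hbottom + htop

noncomputable def qdDenom (r : ℕ) (w : ℂ) : ℂ :=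
  4 * w * sinh (π * w) * sinh (2 * π * w / r)

theorem qdInt_eq (r : ℕ) (z w : ℂ) : qdInt r z w = exp ((2 * z - π) * w) / qdDenom r w := rfl

theorem qdDenom_ne_zero_of_re_ne_zero {r : ℕ} (hr : r ≠ 0) {w : ℂ} (hw : w.re ≠ 0) :
    qdDenom r w ≠ 0 := by
  have hw0 : w ≠ 0 := by rintro rfl; simp at hw
  refine mul_ne_zero (mul_ne_zero (mul_ne_zero (by norm_num) hw0) ?_) ?_ <;>
    apply sinh_ne_zero_of_re_ne_zero <;> simp [hw, hr, Real.pi_ne_zero]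

theorem qdDenom_ne_zero_of_norm_lt_one {r : ℕ} (hr : 2 ≤ r) {w : ℂ} (hw0 : w ≠ 0)
    (hw : ‖w‖ < 1) : qdDenom r w ≠ 0 := by
  have hr' : (2 : ℝ) ≤ r := by exact_mod_cast hr
  refine mul_ne_zero (mul_ne_zero (mul_ne_zero (by norm_num) hw0) ?_) ?_
  · refine sinh_ne_zero_of_norm_lt_pi (by simp [hw0, Real.pi_ne_zero]) ?_
    rw [norm_mul, norm_real, Real.norm_of_nonneg Real.pi_pos.le]
    nlinarith [Real.pi_pos]
  · refine sinh_ne_zero_of_norm_lt_pi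
      (div_ne_zero (by simp [hw0, Real.pi_ne_zero]) (Nat.cast_ne_zero.mpr (by omega))) ?_
    rw [norm_div, norm_mul, norm_mul, Complex.norm_ofNat, norm_real,
      Real.norm_of_nonneg Real.pi_pos.le, Complex.norm_natCast, div_lt_iff₀ (by linarith)]
    nlinarith [Real.pi_pos, norm_nonneg w]

theorem differentiableAt_qdInt {r : ℕ} (z : ℂ) {w : ℂ} (hw : qdDenom r w ≠ 0) :
    DifferentiableAt ℂ (qdInt r z) w := by
  have hD : DifferentiableAt ℂ (qdDenom r) w := by unfold qdDenom; fun_prop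
  exact (by fun_prop : DifferentiableAt ℂ (fun w => exp ((2 * z - π) * w)) w).div hD hw

theorem qdInt_neg (r : ℕ) (z w : ℂ) : qdInt r z (-w) = -qdInt r (π - z) w := by
  simp only [qdInt_eq, qdDenom, mul_neg, neg_div, sinh_neg]
  rw [show -((2 * z - π) * w) = (2 * (π - z) - π) * w by ring]
  ring

theorem qdDenom_ofReal (r : ℕ) (x : ℝ) :
    qdDenom r x = ((4 * x * Real.sinh (π * x) * Real.sinh (2 * π * x / r) : ℝ) : ℂ) := by
  simp [qdDenom]

theorem exp_le_sixteen_mul_norm_qdDenom {r : ℕ} (hr : 0 < r) {x : ℝ} (hx : (r : ℝ) ≤ x) :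
    Real.exp ((π + 2 * π / r) * x) ≤ 16 * ‖qdDenom r x‖ := by
  have hr1 : (1 : ℝ) ≤ r := by exact_mod_cast hr
  have hπ := Real.pi_gt_three
  have h₁ := Real.exp_le_four_mul_sinh (t := π * x) (by nlinarith)
  have h₂ := Real.exp_le_four_mul_sinh (t := 2 * π * x / r) (by
    rw [le_div_iff₀ (by linarith)]; nlinarith)
  rw [qdDenom_ofReal, norm_real, Real.norm_eq_abs]
  calc Real.exp ((π + 2 * π / r) * x) = Real.exp (π * x) * Real.exp (2 * π * x / r) := by
        rw [← Real.exp_add]; ring_nf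
    _ ≤ (4 * Real.sinh (π * x)) * (4 * Real.sinh (2 * π * x / r)) :=
        mul_le_mul h₁ h₂ (Real.exp_pos _).le (by linarith [Real.exp_pos (π * x)])
    _ ≤ 16 * |4 * x * Real.sinh (π * x) * Real.sinh (2 * π * x / r)| := by
        have hs : 0 ≤ Real.sinh (π * x) * Real.sinh (2 * π * x / r) := by
          nlinarith [Real.exp_pos (π * x), Real.exp_pos (2 * π * x / r)]
        refine le_trans ?_ (mul_le_mul_of_nonneg_left (le_abs_self _) (by norm_num))
        nlinarith

theorem qdInt_isBigO_atTop {r : ℕ} (hr : 0 < r) (z : ℂ) :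
    (fun x : ℝ => qdInt r z x) =O[atTop]
      fun x => Real.exp (-(2 * π + 2 * π / r - 2 * z.re) * x) := by
  refine IsBigO.of_bound 16 ?_
  filter_upwards [eventually_ge_atTop (r : ℝ)] with x hx
  have hD := exp_le_sixteen_mul_norm_qdDenom hr hx
  have hD0 : 0 < ‖qdDenom r x‖ := by linarith [Real.exp_pos ((π + 2 * π / r) * x)]
  rw [qdInt_eq, norm_div, norm_exp, Real.norm_of_nonneg (Real.exp_pos _).le, div_le_iff₀ hD0]
  calc Real.exp ((2 * z - π) * x).re
      = Real.exp (-(2 * π + 2 * π / r - 2 * z.re) * x) * Real.exp ((π + 2 * π / r) * x) := by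
        rw [← Real.exp_add, re_mul_ofReal]
        simp only [sub_re, mul_re, re_ofNat, im_ofNat, ofReal_re, zero_mul, sub_zero]
        ring_nf
    _ ≤ _ := by nlinarith [Real.exp_pos (-(2 * π + 2 * π / r - 2 * z.re) * x)]

theorem integrableOn_Ici_qdInt {r : ℕ} (hr : 0 < r) {z : ℂ} (hz : z.re < π + π / r) {ε : ℝ}
    (hε : 0 < ε) : IntegrableOn (fun x : ℝ => qdInt r z x) (Ici ε) := by
  have hδ : 0 < 2 * π + 2 * π / r - 2 * z.re := by
    rw [mul_div_assoc]; linarith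
  refine (ContinuousOn.locallyIntegrableOn (fun x hx => ?_) measurableSet_Ici
    ).integrableOn_of_isBigO_atTop (qdInt_isBigO_atTop hr z)
    ⟨Ioi 0, Ioi_mem_atTop 0, exp_neg_integrableOn_Ioi 0 hδ⟩
  have hx0 : x ≠ 0 := (hε.trans_le hx).ne'
  have hdiff : DifferentiableAt ℂ (qdInt r z) x :=
    differentiableAt_qdInt z (qdDenom_ne_zero_of_re_ne_zero hr.ne' (by simpa using hx0))
  exact (hdiff.continuousAt.comp continuous_ofReal.continuousAt).continuousWithinAt

theorem integrableOn_Iic_qdInt {r : ℕ} (hr : 0 < r) {z : ℂ} (hz : -π / r < z.re) {ε : ℝ}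
    (hε : 0 < ε) : IntegrableOn (fun x : ℝ => qdInt r z x) (Iic (-ε)) := by
  have hz' : (π - z).re < π + π / r := by
    rw [sub_re, ofReal_re]; rw [neg_div] at hz; linarith
  have h := (integrableOn_Ici_qdInt hr hz' hε).neg
  rw [← (Measure.measurePreserving_neg volume).integrableOn_comp_preimage
    (Homeomorph.neg ℝ).measurableEmbedding] at h
  convert h using 1
  · ext x; simp [← qdInt_neg]
  · ext x; simp

theorem qdContour_indep_radius_general (r : ℕ) (hr3 : 3 ≤ r)
    (ε₁ ε₂ : ℝ) (hε₁ : ε₁ ∈ Set.Ioo (0 : ℝ) 1) (hε₂ : ε₂ ∈ Set.Ioo (0 : ℝ) 1) (z : ℂ)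
    (hre1 : -Real.pi / r < z.re) (hre2 : z.re < Real.pi + Real.pi / r) :
    qdContour r ε₁ z = qdContour r ε₂ z := by
  obtain ⟨h₁, h₁'⟩ := hε₁
  obtain ⟨h₂, h₂'⟩ := hε₂
  have hr : 0 < r := by omega
  have hf : DifferentiableOn ℂ (qdInt r z) (upperHalfAnnulus ε₁ ε₂) := by
    rintro w ⟨hw, -⟩
    have hw0 : w ≠ 0 := norm_pos_iff.mp ((lt_min h₁ h₂).trans_le hw.1)
    exact (differentiableAt_qdInt z (qdDenom_ne_zero_of_norm_lt_one (by omega) hw0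
      (hw.2.trans_lt (max_lt h₁' h₂')))).differentiableWithinAt
  have hleft := intervalIntegral.integral_Iic_sub_Iic (integrableOn_Iic_qdInt hr hre1 h₂)
    (integrableOn_Iic_qdInt hr hre1 h₁)
  have hright := intervalIntegral.integral_Ici_sub_Ici' (integrableOn_Ici_qdInt hr hre2 h₁)
    (integrableOn_Ici_qdInt hr hre2 h₂)
  have hsemi := semicircleIntegral_sub_semicircleIntegral h₁ h₂ hf
  change _ + semicircleIntegral (qdInt r z) ε₁ + _ = _ + semicircleIntegral (qdInt r z) ε₂ + _
  linear_combination hleft + hright - hsemi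

theorem qdContour_indep_radius (r : ℕ) (hr3 : 3 ≤ r) (hrodd : Odd r)
    (ε₁ ε₂ : ℝ) (hε₁ : ε₁ ∈ Set.Ioo (0 : ℝ) 1) (hε₂ : ε₂ ∈ Set.Ioo (0 : ℝ) 1) (z : ℂ)
    (hre1 : -Real.pi / r < z.re) (hre2 : z.re < Real.pi + Real.pi / r) :
    qdContour r ε₁ z = qdContour r ε₂ z :=
  qdContour_indep_radius_general r hr3 ε₁ ε₂ hε₁ hε₂ z hre1 hre2
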